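/- For every integer n > 3, the set R(U_n) is dense in the complex plane ℂ. -/

import Mathlib

/-- The antisymmetric bracket `⟨x,y⟩ = x·conj(y) − conj(x)·y`. -/
noncomputable def sbr (x y : ℂ) : ℂ :=
  x * (starRingEnd ℂ) y - (starRingEnd ℂ) x * y

/-- The intersection point `I_{u,v}(p,q)` of the lines `L_u(p)` and `L_v(q)`. -/
noncomputable def Iop (u v p q : ℂ) : ℂ :=
  (sbr u p / sbr u v) * v + (sbr v q / sbr v u) * u

/-- `origamiPts U` is the smallest subset of `ℂ` containing `0` and `1` that is
closed under `(p,q) ↦ I_{u,v}(p,q)` for all `u, v ∈ U` with `u ≠ ±v`.  This is `R(U)`. -/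
inductive origamiPts (U : Set ℂ) : ℂ → Prop
  | zero : origamiPts U 0
  | one : origamiPts U 1
  | inter {u v : ℂ} (hu : u ∈ U) (hv : v ∈ U) (huv : u ≠ v) (huv' : u ≠ -v)
      {p q : ℂ} (hp : origamiPts U p) (hq : origamiPts U q) :
      origamiPts U (Iop u v p q)


/-!
Projecting along one direction of `U` onto another is a step `I_{u,v}(·, 0)`, and with three
pairwise independent directions a parallelogram construction makes `R(U)` closed under addition.
When `U` contains every `e^{ikθ}`, `θ = π/n`, the real coordinates of `R(U)` on a line `ℝ e^{iγ}`
with `γ ∈ θℤ` thus form an additive subgroup of `ℝ`, and two projections onto neighbouring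
directions followed by a reflection back multiply them by `-(sin θ / sin 2θ)² = -1/(4 cos² θ)`.
For `n > 3` this factor has modulus `< 1`, so the subgroup is dense once it is nonzero; density on
the lines `ℝ` and `ℝ e^{2iθ}` gives density in `ℂ`.
-/

open Real ComplexConjugate
open Complex (I)
open scoped Complex

lemma sbr_swap (x y : ℂ) : sbr y x = -sbr x y := by simp only [sbr]; ring

lemma conj_sbr (x y : ℂ) : conj (sbr x y) = -sbr x y := by
  simp only [sbr, map_sub, map_mul, Complex.conj_conj]; ring

lemma sbr_self (x : ℂ) : sbr x x = 0 := by simp only [sbr]; ring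

lemma sbr_neg_left_self (x : ℂ) : sbr (-x) x = 0 := by simp only [sbr, map_neg]; ring

lemma sbr_zero_right (x : ℂ) : sbr x 0 = 0 := by simp [sbr]

lemma sbr_add_right (x y z : ℂ) : sbr x (y + z) = sbr x y + sbr x z := by
  simp only [sbr, map_add]; ring

lemma sbr_mul_right_of_conj_eq {c : ℂ} (hc : conj c = c) (x y : ℂ) :
    sbr x (c * y) = c * sbr x y := by
  simp only [sbr, map_mul, hc]; ring

lemma conj_sbr_div_sbr (a b c d : ℂ) : conj (sbr a b / sbr c d) = sbr a b / sbr c d := by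
  rw [map_div₀, conj_sbr, conj_sbr, neg_div_neg_eq]

section Intersection

variable {u v p q z : ℂ}

lemma Iop_comm (u v p q : ℂ) : Iop v u q p = Iop u v p q := add_comm _ _

lemma Iop_zero_right (u v p : ℂ) : Iop u v p 0 = sbr u p / sbr u v * v := by
  simp [Iop, sbr_zero_right]

lemma sbr_Iop_left (h : sbr u v ≠ 0) : sbr u (Iop u v p q) = sbr u p := by
  rw [Iop, sbr_add_right, sbr_mul_right_of_conj_eq (conj_sbr_div_sbr _ _ _ _),
    sbr_mul_right_of_conj_eq (conj_sbr_div_sbr _ _ _ _), sbr_self, mul_zero, add_zero,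
    div_mul_cancel₀ _ h]

lemma sbr_Iop_right (h : sbr u v ≠ 0) : sbr v (Iop u v p q) = sbr v q := by
  rw [← Iop_comm]
  exact sbr_Iop_left (by rwa [sbr_swap, neg_ne_zero])

lemma Iop_eq_of_sbr_eq (h : sbr u v ≠ 0) (hp : sbr u p = sbr u z) (hq : sbr v q = sbr v z) :
    Iop u v p q = z := by
  rw [Iop, hp, hq, sbr_swap u v]
  field_simp
  simp only [sbr]
  ring

end Intersection

namespace origamiPts

variable {U : Set ℂ} {u v w p q : ℂ}

lemma inter_of_sbr_ne_zero (hu : u ∈ U) (hv : v ∈ U) (h : sbr u v ≠ 0)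
    (hp : origamiPts U p) (hq : origamiPts U q) : origamiPts U (Iop u v p q) :=
  inter hu hv (by rintro rfl; exact h (sbr_self u))
    (by rintro rfl; exact h (sbr_neg_left_self v)) hp hq

lemma add (hu : u ∈ U) (hv : v ∈ U) (hw : w ∈ U)
    (huv : sbr u v ≠ 0) (huw : sbr u w ≠ 0) (hvw : sbr v w ≠ 0)
    (hp : origamiPts U p) (hq : origamiPts U q) : origamiPts U (p + q) := by
  have hA : Iop v w (Iop u w p 0) (Iop u v q 0) = Iop u w p 0 + Iop u v q 0 :=
    Iop_eq_of_sbr_eq hvw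
      (by rw [sbr_add_right, sbr_Iop_right huv, sbr_zero_right, add_zero])
      (by rw [sbr_add_right, sbr_Iop_right huw, sbr_zero_right, zero_add])
  have hB : Iop u w (Iop v w p 0) (Iop u v 0 q) = Iop v w p 0 + Iop u v 0 q :=
    Iop_eq_of_sbr_eq huw
      (by rw [sbr_add_right, sbr_Iop_left huv, sbr_zero_right, add_zero])
      (by rw [sbr_add_right, sbr_Iop_right hvw, sbr_zero_right, zero_add])
  have hsum : Iop u v (Iop u w p 0 + Iop u v q 0) (Iop v w p 0 + Iop u v 0 q) = p + q :=
    Iop_eq_of_sbr_eq huv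
      (by rw [sbr_add_right, sbr_Iop_left huw, sbr_Iop_left huv, sbr_add_right])
      (by rw [sbr_add_right, sbr_Iop_left hvw, sbr_Iop_right huv, sbr_add_right])
  have hmem := inter_of_sbr_ne_zero hu hv huv
    (inter_of_sbr_ne_zero hv hw hvw (inter_of_sbr_ne_zero hu hw huw hp zero)
      (inter_of_sbr_ne_zero hu hv huv hq zero))
    (inter_of_sbr_ne_zero hu hw huw (inter_of_sbr_ne_zero hv hw hvw hp zero)
      (inter_of_sbr_ne_zero hu hv huv zero hq))
  rwa [hA, hB, hsum] at hmem

end origamiPts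

lemma sbr_exp_mul_I (α β : ℝ) :
    sbr (cexp (α * I)) (cexp (β * I)) = 2 * I * (sin (α - β) : ℂ) := by
  have hconj (γ : ℝ) : conj (cexp (γ * I)) = cexp (-γ * I) := by
    rw [← Complex.exp_conj, map_mul, Complex.conj_ofReal, Complex.conj_I, neg_mul, mul_neg]
  rw [sbr, hconj, hconj, ← Complex.exp_add, ← Complex.exp_add, Complex.ofReal_sin, Complex.sin]
  push_cast
  ring_nf
  rw [Complex.I_sq]
  ring

lemma sbr_exp_mul_I_ne_zero {α β : ℝ} (h : sin (α - β) ≠ 0) :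
    sbr (cexp (α * I)) (cexp (β * I)) ≠ 0 := by
  rw [sbr_exp_mul_I]
  exact mul_ne_zero (by simp [Complex.I_ne_zero]) (Complex.ofReal_ne_zero.mpr h)

lemma Iop_exp_mul_I (α β γ r : ℝ) :
    Iop (cexp (α * I)) (cexp (β * I)) (r * cexp (γ * I)) 0
      = ((r * sin (α - γ) / sin (α - β) : ℝ) : ℂ) * cexp (β * I) := by
  rw [Iop_zero_right, sbr_mul_right_of_conj_eq (Complex.conj_ofReal r), sbr_exp_mul_I,
    sbr_exp_mul_I, mul_left_comm, mul_div_mul_left _ _ (by simp [Complex.I_ne_zero])]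
  push_cast
  ring

def lineCoeffs (U : Set ℂ) (γ : ℝ) : Set ℝ := {r : ℝ | origamiPts U (r * cexp (γ * I))}

lemma lineCoeffs_add_two_pi (U : Set ℂ) (γ : ℝ) : lineCoeffs U (γ + 2 * π) = lineCoeffs U γ := by
  simp only [lineCoeffs]
  push_cast
  simp only [add_mul, Complex.exp_add, Complex.exp_two_pi_mul_I, mul_one]

section LineCoeffs

variable {U : Set ℂ} {α β γ μ r : ℝ}

lemma mul_sin_div_sin_mem_lineCoeffs (hα : cexp (α * I) ∈ U) (hβ : cexp (β * I) ∈ U)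
    (hαβ : sin (α - β) ≠ 0) (hr : r ∈ lineCoeffs U γ) :
    r * sin (α - γ) / sin (α - β) ∈ lineCoeffs U β := by
  have h := origamiPts.inter_of_sbr_ne_zero hα hβ (sbr_exp_mul_I_ne_zero hαβ) hr origamiPts.zero
  rwa [Iop_exp_mul_I] at h

lemma neg_mem_lineCoeffs_add_two_mul {A : AddSubgroup ℝ} (hU : ∀ α ∈ A, cexp (α * I) ∈ U)
    (hγ : γ ∈ A) (hμ : μ ∈ A) (hsin : sin μ ≠ 0) (hr : r ∈ lineCoeffs U γ) :
    -r ∈ lineCoeffs U (γ + 2 * μ) := by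
  have hμμ : 2 * μ ∈ A := by simpa only [two_mul] using add_mem hμ hμ
  have h := mul_sin_div_sin_mem_lineCoeffs (hU _ (add_mem hγ hμ)) (hU _ (add_mem hγ hμμ))
    (by rwa [show γ + μ - (γ + 2 * μ) = -μ by ring, Real.sin_neg, neg_ne_zero]) hr
  rwa [show γ + μ - (γ + 2 * μ) = -μ by ring, add_sub_cancel_left, Real.sin_neg, mul_div_assoc,
    div_neg, div_self hsin, mul_neg_one] at h

end LineCoeffs

lemma AddSubgroup.dense_of_mul_mem {S : AddSubgroup ℝ} {c : ℝ} (hc₀ : c ≠ 0) (hc₁ : |c| < 1)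
    (hS : ∀ x ∈ S, c * x ∈ S) {r : ℝ} (hrS : r ∈ S) (hr : r ≠ 0) : Dense (S : Set ℝ) := by
  have hpow (k : ℕ) : c ^ k * r ∈ S := by
    induction k with
    | zero => simpa using hrS
    | succ k ih => simpa [pow_succ', mul_assoc] using hS _ ih
  refine S.dense_of_not_isolated_zero fun ε hε => ?_
  obtain ⟨k, hk⟩ := exists_pow_lt_of_lt_one (div_pos hε (abs_pos.mpr hr)) hc₁
  refine ⟨|c ^ k * r|, abs_mem_iff.mpr (hpow k), abs_pos.mpr (by positivity), ?_⟩
  rwa [abs_mul, abs_pow, ← lt_div_iff₀ (abs_pos.mpr hr)]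

lemma dense_origamiPts_of_dense_lineCoeffs {U : Set ℂ} {α β : ℝ} (hαβ : sin (α - β) ≠ 0)
    (hadd : ∀ {p q : ℂ}, origamiPts U p → origamiPts U q → origamiPts U (p + q))
    (hα : Dense (lineCoeffs U α)) (hβ : Dense (lineCoeffs U β)) :
    Dense {z : ℂ | origamiPts U z} := by
  set u := cexp (α * I)
  set v := cexp (β * I)
  have huv : sbr u v ≠ 0 := sbr_exp_mul_I_ne_zero hαβ
  let f : ℝ × ℝ → ℂ := fun x => x.1 * u + x.2 * v
  -- `z = Iop u v z z` writes `z` in the real basis `(u, v)`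
  have hf : Function.Surjective f := fun z => by
    refine ⟨((sbr v z / sbr v u).re, (sbr u z / sbr u v).re), ?_⟩
    simp only [f, Complex.conj_eq_iff_re.mp (conj_sbr_div_sbr _ _ _ _)]
    rw [add_comm, ← Iop, Iop_eq_of_sbr_eq huv rfl rfl]
  refine ((hf.denseRange.dense_image (by fun_prop) (hα.prod hβ)).mono ?_)
  rintro _ ⟨x, ⟨hx₁, hx₂⟩, rfl⟩
  exact hadd hx₁ hx₂

lemma exp_mul_I_pow_eq_one_of_mem_zmultiples {n : ℕ} {α : ℝ}
    (hα : α ∈ AddSubgroup.zmultiples (π / n)) : cexp (α * I) ^ (2 * n) = 1 := by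
  obtain ⟨k, rfl⟩ := AddSubgroup.mem_zmultiples_iff.mp hα
  rcases eq_or_ne n 0 with rfl | hn
  · simp
  have hn' : (n : ℂ) ≠ 0 := by exact_mod_cast hn
  rw [← Complex.exp_nat_mul, ← Complex.exp_int_mul_two_pi_mul_I k]
  congr 1
  push_cast
  rw [zsmul_eq_mul]
  field_simp

section RootsOfUnity

variable {n : ℕ} {U : Set ℂ} {γ r : ℝ}

lemma sin_pi_div_pos (hn : 2 ≤ n) : 0 < sin (π / n) := by
  have : (2 : ℝ) ≤ n := by exact_mod_cast hn
  exact Real.sin_pos_of_pos_of_lt_pi (by positivity) (div_lt_self pi_pos (by linarith))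

lemma sin_two_mul_pi_div_pos (hn : 3 ≤ n) : 0 < sin (2 * (π / n)) := by
  have : (3 : ℝ) ≤ n := by exact_mod_cast hn
  refine Real.sin_pos_of_pos_of_lt_pi (by positivity) ?_
  rw [mul_div_assoc', div_lt_iff₀ (by positivity)]
  nlinarith [pi_pos]

lemma sin_pi_div_lt_sin_two_mul_pi_div (hn : 4 ≤ n) :
    sin (π / n) < sin (2 * (π / n)) := by
  have : (4 : ℝ) ≤ n := by exact_mod_cast hn
  have hθ : 0 < π / n := by positivity
  have hθ' : π / n ≤ π / 4 := div_le_div_of_nonneg_left pi_pos.le (by norm_num) this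
  exact Real.strictMonoOn_sin ⟨by linarith, by linarith⟩ ⟨by linarith, by linarith⟩ (by linarith)

lemma origamiPts_add_of_three_le (hn : 3 ≤ n)
    (hU : ∀ α ∈ AddSubgroup.zmultiples (π / n), cexp (α * I) ∈ U) {p q : ℂ}
    (hp : origamiPts U p) (hq : origamiPts U q) : origamiPts U (p + q) := by
  have hθ := AddSubgroup.mem_zmultiples (π / n)
  have hθθ : 2 * (π / n) ∈ AddSubgroup.zmultiples (π / n) := by
    simpa only [two_mul] using add_mem hθ hθ
  have h₁ := (sin_pi_div_pos (by omega : 2 ≤ n)).ne'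
  have h₂ := (sin_two_mul_pi_div_pos hn).ne'
  refine origamiPts.add (hU _ hθθ) (hU _ hθ) (hU 0 (zero_mem _)) (sbr_exp_mul_I_ne_zero ?_)
    (sbr_exp_mul_I_ne_zero ?_) (sbr_exp_mul_I_ne_zero ?_) hp hq
  · rwa [show 2 * (π / n) - π / n = π / n by ring]
  · rwa [sub_zero]
  · rwa [sub_zero]

/-- Three reflections through directions at angles `θ`, `θ` and `π - 2θ` turn the line
`ℝ · e^{iγ}` a full turn and change the sign of the coordinate. -/
lemma neg_mem_lineCoeffs (hn : 3 ≤ n)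
    (hU : ∀ α ∈ AddSubgroup.zmultiples (π / n), cexp (α * I) ∈ U)
    (hγ : γ ∈ AddSubgroup.zmultiples (π / n)) (hr : r ∈ lineCoeffs U γ) :
    -r ∈ lineCoeffs U γ := by
  set θ := π / n
  have hθ : θ ∈ AddSubgroup.zmultiples θ := AddSubgroup.mem_zmultiples _
  have hθθ : 2 * θ ∈ AddSubgroup.zmultiples θ := by simpa only [two_mul] using add_mem hθ hθ
  have hπ : π ∈ AddSubgroup.zmultiples θ := by
    have hn0 : (n : ℝ) ≠ 0 := by positivity
    simpa [θ, mul_div_cancel₀ π hn0] using AddSubgroup.intCast_mul_mem_zmultiples θ n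
  have hsin := (sin_pi_div_pos (by omega : 2 ≤ n)).ne'
  have hsin' : sin (π - 2 * θ) ≠ 0 := by
    rw [Real.sin_pi_sub]; exact (sin_two_mul_pi_div_pos hn).ne'
  have h₁ := neg_mem_lineCoeffs_add_two_mul hU hγ hθ hsin hr
  have h₂ := neg_mem_lineCoeffs_add_two_mul hU (add_mem hγ hθθ) hθ hsin h₁
  have h₃ := neg_mem_lineCoeffs_add_two_mul hU (add_mem (add_mem hγ hθθ) hθθ) (sub_mem hπ hθθ)
    hsin' h₂
  rwa [neg_neg, show γ + 2 * θ + 2 * θ + 2 * (π - 2 * θ) = γ + 2 * π by ring,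
    lineCoeffs_add_two_pi] at h₃

lemma neg_sq_mul_mem_lineCoeffs (hn : 3 ≤ n)
    (hU : ∀ α ∈ AddSubgroup.zmultiples (π / n), cexp (α * I) ∈ U)
    (hγ : γ ∈ AddSubgroup.zmultiples (π / n)) (hr : r ∈ lineCoeffs U γ) :
    -(sin (π / n) / sin (2 * (π / n))) ^ 2 * r ∈ lineCoeffs U γ := by
  set θ := π / n
  have hθ : θ ∈ AddSubgroup.zmultiples θ := AddSubgroup.mem_zmultiples _
  have hshrink {δ s : ℝ} (hδ : δ ∈ AddSubgroup.zmultiples θ) (hs : s ∈ lineCoeffs U δ) :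
      s * sin θ / sin (2 * θ) ∈ lineCoeffs U (δ - θ) := by
    have h := mul_sin_div_sin_mem_lineCoeffs (hU _ (add_mem hδ hθ)) (hU _ (sub_mem hδ hθ))
      (by rw [show δ + θ - (δ - θ) = 2 * θ by ring]; exact (sin_two_mul_pi_div_pos hn).ne') hs
    rwa [add_sub_cancel_left, show δ + θ - (δ - θ) = 2 * θ by ring] at h
  have h := neg_mem_lineCoeffs_add_two_mul hU (sub_mem (sub_mem hγ hθ) hθ) hθ
    (sin_pi_div_pos (by omega)).ne' (hshrink (sub_mem hγ hθ) (hshrink hγ hr))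
  convert h using 2 <;> ring

lemma dense_lineCoeffs (hn : 4 ≤ n)
    (hU : ∀ α ∈ AddSubgroup.zmultiples (π / n), cexp (α * I) ∈ U)
    (hγ : γ ∈ AddSubgroup.zmultiples (π / n)) (hr : r ∈ lineCoeffs U γ) (hr₀ : r ≠ 0) :
    Dense (lineCoeffs U γ) := by
  have hn₃ : 3 ≤ n := by omega
  let S : AddSubgroup ℝ :=
    { carrier := lineCoeffs U γ
      add_mem' := fun {a b} ha hb => by
        change origamiPts U (((a + b : ℝ) : ℂ) * _)
        rw [Complex.ofReal_add, add_mul]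
        exact origamiPts_add_of_three_le hn₃ hU ha hb
      zero_mem' := by
        change origamiPts U (((0 : ℝ) : ℂ) * _)
        simpa using origamiPts.zero
      neg_mem' := neg_mem_lineCoeffs hn₃ hU hγ }
  have hs₀ := sin_pi_div_pos (by omega : 2 ≤ n)
  have hs₁ := sin_two_mul_pi_div_pos hn₃
  have hlt : sin (π / n) / sin (2 * (π / n)) < 1 :=
    (div_lt_one hs₁).mpr (sin_pi_div_lt_sin_two_mul_pi_div hn)
  refine AddSubgroup.dense_of_mul_mem (S := S) (neg_ne_zero.mpr (by positivity)) ?_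
    (fun x hx => neg_sq_mul_mem_lineCoeffs hn₃ hU hγ hx) hr hr₀
  rw [abs_neg, abs_of_pos (by positivity)]
  exact pow_lt_one₀ (by positivity) hlt two_ne_zero

lemma dense_origamiPts (hn : 4 ≤ n)
    (hU : ∀ α ∈ AddSubgroup.zmultiples (π / n), cexp (α * I) ∈ U) :
    Dense {z : ℂ | origamiPts U z} := by
  have hθ := AddSubgroup.mem_zmultiples (π / n)
  have h₁ : (1 : ℝ) ∈ lineCoeffs U 0 := by
    change origamiPts U (((1 : ℝ) : ℂ) * cexp (((0 : ℝ) : ℂ) * I))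
    simpa using origamiPts.one
  have h₂ : (-1 : ℝ) ∈ lineCoeffs U (2 * (π / n)) := by
    simpa only [zero_add] using
      neg_mem_lineCoeffs_add_two_mul hU (zero_mem _) hθ (sin_pi_div_pos (by omega)).ne' h₁
  refine dense_origamiPts_of_dense_lineCoeffs
    (by rw [sub_zero]; exact (sin_two_mul_pi_div_pos (by omega)).ne')
    (origamiPts_add_of_three_le (by omega) hU)
    (dense_lineCoeffs hn hU (by simpa only [two_mul] using add_mem hθ hθ) h₂ (by norm_num))
    (dense_lineCoeffs hn hU (zero_mem _) h₁ one_ne_zero)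

end RootsOfUnity

/-- For every integer `n > 3`, the set `R(U_n)` is dense in the complex plane.
Here `U_n` is the group of `2n`-th roots of unity in `ℂ`. -/
theorem stmt_19 (n : ℕ) (hn : 3 < n) :
    Dense {z : ℂ | origamiPts {w : ℂ | w ^ (2 * n) = 1} z} :=
  dense_origamiPts hn fun _ hα => exp_mul_I_pow_eq_one_of_mem_zmultiples hα
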